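/- Let n₁ = sN₁ and n₂ = sN₂ with s = 2ℓ−1 odd. If G̃(x,y) = Σ_{u,v} g̃(x_u^{n₁}, y_v^{n₂}) Φ_{m₁,u}^{n₁}(x) Φ_{m₂,v}^{n₂}(y) is the bivariate VP interpolant of g̃ at the n₁×n₂ Chebyshev grid, then its values at the coarser N₁×N₂ Chebyshev grid equal the original samples: G̃(x_{h₁}^{N₁}, y_{h₂}^{N₂}) = g̃(x_{i(h₁)}^{n₁}, x_{i(h₂)}^{n₂}) with i(h) = (s(2h−1)+1)/2, for all h₁ = 1,…,N₁ and h₂ = 1,…,N₂. In particular the downscaled output is independent of the VP parameters m₁, m₂. -/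

import Mathlib

/-- Chebyshev node angle `t_k^n = (2k-1)π/(2n)`. -/
noncomputable def tnode (n k : ℕ) : ℝ := (2 * (k : ℝ) - 1) * Real.pi / (2 * n)

/-- Chebyshev node `x_k^n = cos t_k^n`. -/
noncomputable def xnode (n k : ℕ) : ℝ := Real.cos (tnode n k)

/-- Orthogonal VP polynomial `q_{m,r}^n`, as a function of `ξ = cos t`. -/
noncomputable def qVP (n m r : ℕ) (ξ : ℝ) : ℝ :=
  if r ≤ n - m then Real.cos (r * Real.arccos ξ)
  else ((n : ℝ) + m - r) / (2 * m) * Real.cos (r * Real.arccos ξ)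
      + ((n : ℝ) - m - r) / (2 * m) * Real.cos ((2 * (n : ℝ) - r) * Real.arccos ξ)

/-- Fundamental VP polynomial `Φ_{m,k}^n`, as a function of `ξ = cos t`. -/
noncomputable def phiVP (n m k : ℕ) (ξ : ℝ) : ℝ :=
  2 / (n : ℝ) * (1 / 2 + ∑ r ∈ Finset.Icc 1 (n - 1),
    Real.cos (r * tnode n k) * qVP n m r ξ)

/-- Bivariate VP interpolant of `g̃` at the `n₁ × n₂` Chebyshev grid. -/
noncomputable def VPop (n₁ n₂ m₁ m₂ : ℕ) (g : ℝ → ℝ → ℝ) (x y : ℝ) : ℝ :=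
  ∑ u ∈ Finset.Icc 1 n₁, ∑ v ∈ Finset.Icc 1 n₂,
    g (xnode n₁ u) (xnode n₂ v) * phiVP n₁ m₁ u x * phiVP n₂ m₂ v y

/-- Index map `i(h) = (s(2h-1)+1)/2`. -/
def idx (s h : ℕ) : ℕ := (s * (2 * h - 1) + 1) / 2

/-! At a fine node `x_j^n` the blended VP term `q_{m,r}^n` collapses to `cos (r t_j)`, since
`cos ((2n - r) t_j) = -cos (r t_j)`; the discrete orthogonality of `r ↦ cos (r t)` over the
Chebyshev angles then gives `Φ_{m,k}^n (x_j^n) = δ_{kj}` for every `m`. For odd `s` the coarse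
node `x_h^N` is the fine node `x_{i(h)}^{sN}`, so on the coarse grid the interpolant just returns
the fine samples. -/

open Real Finset

theorem sum_range_cos_mul_int_mul_pi_div {n : ℕ} {q : ℤ} (hq : q ≠ 0) (hqn : |q| < 2 * n) :
    ∑ r ∈ range n, cos (r * (q * π / n)) = (1 - cos (q * π)) / 2 := by
  have hn : (0 : ℝ) < n := by
    have : (0 : ℤ) < n := by have := abs_nonneg q; omega
    exact_mod_cast this
  set a : ℝ := q * π / n
  have hsin : sin (a / 2) ≠ 0 := by
    have hqn' : |(q : ℝ)| < 2 * n := by exact_mod_cast hqn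
    have ha : a / 2 = q / (2 * n) * π := by simp only [a]; field_simp
    rw [ha, Ne, sin_eq_zero_iff_of_lt_of_lt] <;> rw [abs_lt] at hqn'
    · simp [hq, hn.ne', pi_ne_zero]
    · rw [neg_lt, ← neg_mul]
      exact mul_lt_of_lt_one_left pi_pos (by rw [neg_lt, lt_div_iff₀ (by positivity)]; linarith)
    · exact mul_lt_of_lt_one_left pi_pos (by rw [div_lt_iff₀ (by positivity)]; linarith)
  have hna : n * a / 2 = q * π / 2 := by simp only [a]; field_simp
  have hcos : cos (q * π) = 1 - 2 * sin (q * π / 2) ^ 2 := by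
    rw [← cos_two_mul_eq_one_sub]; ring_nf
  have hsin_mul_cos : sin (q * π / 2) * cos (q * π / 2) = 0 := by
    have : sin (q * π) = 2 * sin (q * π / 2) * cos (q * π / 2) := by
      rw [← sin_two_mul]; ring_nf
    linarith [sin_int_mul_pi q]
  refine mul_left_cancel₀ hsin ?_
  calc sin (a / 2) * ∑ r ∈ range n, cos (r * a)
      = sin (a / 2) * ∑ r ∈ range n, cos (a * r + 0) := by simp only [mul_comm, add_zero]
    _ = sin (q * π / 2) * cos (q * π / 2 - a / 2) := by
      rw [sin_mul_sum_cos, hna]; congr 2; linear_combination hna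
    _ = sin (a / 2) * ((1 - cos (q * π)) / 2) := by
      rw [cos_sub, hcos]; linear_combination cos (a / 2) * hsin_mul_cos

theorem sum_range_eq_add_sum_Icc {M : Type*} [AddCommMonoid M] {n : ℕ} (hn : 1 ≤ n)
    (f : ℕ → M) : ∑ r ∈ range n, f r = f 0 + ∑ r ∈ Icc 1 (n - 1), f r := by
  rw [range_eq_Ico, sum_eq_sum_Ico_succ_bot (by omega)]
  -- `Ico 1 n` and `Icc 1 (n - 1)` are definitionally equal on `ℕ`
  congr 1

theorem two_mul_cos_mul_tnode_mul_cos (n k j r : ℕ) :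
    2 * (cos (r * tnode n k) * cos (r * tnode n j)) =
      cos (r * (((k - j : ℤ) : ℝ) * π / n)) + cos (r * (((k + j - 1 : ℤ) : ℝ) * π / n)) := by
  rw [← mul_assoc, two_mul_cos_mul_cos, tnode, tnode]
  push_cast
  ring_nf

theorem half_add_sum_cos_mul_tnode_mul_cos {n k j : ℕ} (hk : k ∈ Icc 1 n) (hj : j ∈ Icc 1 n) :
    1 / 2 + ∑ r ∈ Icc 1 (n - 1), cos (r * tnode n k) * cos (r * tnode n j) =
      if k = j then (n : ℝ) / 2 else 0 := by
  rw [mem_Icc] at hk hj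
  set S : ℤ → ℝ := fun q ↦ ∑ r ∈ range n, cos (r * (q * π / n))
  have hS : S (k - j) + S (k + j - 1) =
      2 + 2 * ∑ r ∈ Icc 1 (n - 1), cos (r * tnode n k) * cos (r * tnode n j) :=
    calc S (k - j) + S (k + j - 1)
        = ∑ r ∈ range n, 2 * (cos (r * tnode n k) * cos (r * tnode n j)) := by
          simp only [S, ← sum_add_distrib, two_mul_cos_mul_tnode_mul_cos]
      _ = 2 + 2 * ∑ r ∈ Icc 1 (n - 1), cos (r * tnode n k) * cos (r * tnode n j) := by
          rw [sum_range_eq_add_sum_Icc (by omega), ← mul_sum]; simp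
  have hS₂ : S (k + j - 1) = (1 - cos (((k + j - 1 : ℤ) : ℝ) * π)) / 2 :=
    sum_range_cos_mul_int_mul_pi_div (n := n) (by omega) (by rw [abs_lt]; omega)
  split_ifs with hkj
  · subst hkj
    have hS₁ : S (k - k) = n := by simp [S]
    have hcos : cos (((k + k - 1 : ℤ) : ℝ) * π) = -1 := by
      rw [← cos_int_mul_two_pi_sub_pi k]; push_cast; ring_nf
    rw [hS₁, hS₂, hcos] at hS; linarith
  · have hS₁ : S (k - j) = (1 - cos (((k - j : ℤ) : ℝ) * π)) / 2 :=
      sum_range_cos_mul_int_mul_pi_div (n := n) (by omega) (by rw [abs_lt]; omega)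
    have hcos : cos (((k + j - 1 : ℤ) : ℝ) * π) = - cos (((k - j : ℤ) : ℝ) * π) := by
      rw [← cos_add_pi, ← cos_nat_mul_two_pi_sub _ k]; push_cast; ring_nf
    rw [hS₁, hS₂, hcos] at hS; linarith

theorem arccos_xnode {n j : ℕ} (hj : j ∈ Icc 1 n) : arccos (xnode n j) = tnode n j := by
  rw [mem_Icc] at hj
  have hj₁ : (1 : ℝ) ≤ j := by exact_mod_cast hj.1
  have hjn : (j : ℝ) ≤ n := by exact_mod_cast hj.2
  refine arccos_cos (div_nonneg (mul_nonneg (by linarith) pi_pos.le) (by positivity)) ?_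
  rw [tnode, div_le_iff₀ (by linarith)]
  nlinarith [pi_pos]

theorem cos_two_mul_sub_mul_tnode {n j : ℕ} (hj : j ∈ Icc 1 n) (r : ℝ) :
    cos ((2 * n - r) * tnode n j) = -cos (r * tnode n j) := by
  have hn : (n : ℝ) ≠ 0 := by have := (mem_Icc.mp hj).1.trans (mem_Icc.mp hj).2; positivity
  rw [← cos_add_pi, ← cos_nat_mul_two_pi_sub _ j, tnode]
  congr 1
  field_simp
  ring

theorem qVP_xnode {n j : ℕ} (m : ℕ) {r : ℕ} (hr : r ≤ n) (hj : j ∈ Icc 1 n) :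
    qVP n m r (xnode n j) = cos (r * tnode n j) := by
  rw [qVP, arccos_xnode hj]
  split_ifs with hrm
  · rfl
  · have hm : (m : ℝ) ≠ 0 := by norm_cast; omega
    rw [cos_two_mul_sub_mul_tnode hj]
    field_simp
    ring

theorem phiVP_xnode {n k j : ℕ} (m : ℕ) (hk : k ∈ Icc 1 n) (hj : j ∈ Icc 1 n) :
    phiVP n m k (xnode n j) = if k = j then 1 else 0 := by
  have hn : (n : ℝ) ≠ 0 := by have := (mem_Icc.mp hj).1.trans (mem_Icc.mp hj).2; positivity
  have hq : ∀ r ∈ Icc 1 (n - 1), cos (r * tnode n k) * qVP n m r (xnode n j) =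
      cos (r * tnode n k) * cos (r * tnode n j) := fun r hr ↦ by
    rw [qVP_xnode m (by rw [mem_Icc] at hr; omega) hj]
  rw [phiVP, sum_congr rfl hq, half_add_sum_cos_mul_tnode_mul_cos hk hj]
  split_ifs
  · field_simp
  · simp

theorem VPop_xnode {n₁ n₂ j₁ j₂ : ℕ} (m₁ m₂ : ℕ) (g : ℝ → ℝ → ℝ) (hj₁ : j₁ ∈ Icc 1 n₁)
    (hj₂ : j₂ ∈ Icc 1 n₂) :
    VPop n₁ n₂ m₁ m₂ g (xnode n₁ j₁) (xnode n₂ j₂) = g (xnode n₁ j₁) (xnode n₂ j₂) := by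
  rw [VPop, sum_eq_single_of_mem j₁ hj₁, sum_eq_single_of_mem j₂ hj₂]
  · simp [phiVP_xnode _ hj₁ hj₁, phiVP_xnode _ hj₂ hj₂]
  · intro v hv hvj
    simp [phiVP_xnode _ hv hj₂, hvj]
  · intro u hu huj
    simp [phiVP_xnode _ hu hj₁, huj]

theorem two_mul_idx {s h : ℕ} (hs : Odd s) (hh : 1 ≤ h) : 2 * idx s h = s * (2 * h - 1) + 1 :=
  Nat.two_mul_div_two_of_even (hs.mul (by rw [Nat.odd_sub (by omega)]; simp)).add_one

theorem idx_mem_Icc {s N h : ℕ} (hs : Odd s) (hh : h ∈ Icc 1 N) : idx s h ∈ Icc 1 (s * N) := by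
  rw [mem_Icc] at hh ⊢
  have h2 := two_mul_idx hs hh.1
  have hpos : 1 ≤ s * (2 * h - 1) := Nat.one_le_iff_ne_zero.mpr (mul_ne_zero hs.pos.ne' (by omega))
  have hle : s * (2 * h - 1) + s ≤ 2 * (s * N) := by
    calc s * (2 * h - 1) + s = s * (2 * h) := by rw [← Nat.mul_succ]; congr 1; omega
      _ ≤ 2 * (s * N) := by nlinarith
  omega

theorem xnode_mul_idx {s h : ℕ} (N : ℕ) (hs : Odd s) (hh : 1 ≤ h) :
    xnode (s * N) (idx s h) = xnode N h := by
  have hs₀ : (s : ℝ) ≠ 0 := by exact_mod_cast hs.pos.ne'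
  have hidx : 2 * (idx s h : ℝ) - 1 = s * (2 * h - 1) := by
    have := congrArg (Nat.cast (R := ℝ)) (two_mul_idx hs hh)
    push_cast [Nat.cast_sub (by omega : 1 ≤ 2 * h)] at this
    linarith
  rw [xnode, xnode, tnode, tnode, hidx, Nat.cast_mul, mul_assoc, mul_left_comm 2,
    mul_div_mul_left _ _ hs₀]

theorem VP_downscale_eq_subsample_general (ℓ s N₁ N₂ n₁ n₂ : ℕ) (hℓ : 1 ≤ ℓ)
    (hs : s = 2 * ℓ - 1)
    (hn₁ : n₁ = s * N₁) (hn₂ : n₂ = s * N₂)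
    (m₁ m₂ : ℕ) (g : ℝ → ℝ → ℝ) :
    ∀ h₁ h₂, 1 ≤ h₁ → h₁ ≤ N₁ → 1 ≤ h₂ → h₂ ≤ N₂ →
      VPop n₁ n₂ m₁ m₂ g (xnode N₁ h₁) (xnode N₂ h₂)
        = g (xnode n₁ (idx s h₁)) (xnode n₂ (idx s h₂)) := by
  intro h₁ h₂ hh₁ hh₁N hh₂ hh₂N
  have hodd : Odd s := ⟨ℓ - 1, by omega⟩
  subst hn₁ hn₂
  rw [← xnode_mul_idx N₁ hodd hh₁, ← xnode_mul_idx N₂ hodd hh₂]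
  exact VPop_xnode m₁ m₂ g (idx_mem_Icc hodd (mem_Icc.mpr ⟨hh₁, hh₁N⟩))
    (idx_mem_Icc hodd (mem_Icc.mpr ⟨hh₂, hh₂N⟩))

theorem VP_downscale_eq_subsample (ℓ s N₁ N₂ n₁ n₂ : ℕ) (hℓ : 1 ≤ ℓ)
    (hs : s = 2 * ℓ - 1) (hN₁ : 1 ≤ N₁) (hN₂ : 1 ≤ N₂)
    (hn₁ : n₁ = s * N₁) (hn₂ : n₂ = s * N₂)
    (m₁ m₂ : ℕ) (hm₁ : m₁ < n₁) (hm₂ : m₂ < n₂) (g : ℝ → ℝ → ℝ) :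
    ∀ h₁ h₂, 1 ≤ h₁ → h₁ ≤ N₁ → 1 ≤ h₂ → h₂ ≤ N₂ →
      VPop n₁ n₂ m₁ m₂ g (xnode N₁ h₁) (xnode N₂ h₂)
        = g (xnode n₁ (idx s h₁)) (xnode n₂ (idx s h₂)) :=
  VP_downscale_eq_subsample_general ℓ s N₁ N₂ n₁ n₂ hℓ hs hn₁ hn₂ m₁ m₂ g
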